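/- arXiv:1107.5657 — 2 statements merged into one kernel-verified Lean document; each statement's English description precedes it below -/
import Mathlib

section
/- Let (X_n) be a sequence of ℝ^d-valued random variables satisfying conditions H1 and H2 with respect to μ, φ, A_n, Σ_n. Suppose there exist a non-decreasing function c : [0,∞) → [0,∞) with c(0) = 1 and a Lebesgue-integrable function h : ℝ^d → [0,∞) such that |φ_n(t)| ≤ h(A_n* t)·c(|t|) for all n and all t ∈ ℝ^d. Then condition H3 holds, i.e. (X_n) satisfies mod-φ convergence. -/
open MeasureTheory Filter Topology Matrix

noncomputable section

/-- `ℝ^d` with its Euclidean structure. -/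
abbrev Ed (d : ℕ) := EuclideanSpace ℝ (Fin d)

/-- Action of a `d × d` real matrix on `ℝ^d`. -/
def mact {d : ℕ} (M : Matrix (Fin d) (Fin d) ℝ) (x : Ed d) : Ed d :=
  Matrix.toEuclideanLin M x

/-- Characteristic function of an `ℝ^d`-valued random variable:
`φ_X(t) = E[exp(i ⟪t, X⟫)]`. -/
def rvCharFun {d : ℕ} {Ω : Type*} [MeasurableSpace Ω] (P : Measure Ω)
    (X : Ω → Ed d) (t : Ed d) : ℂ :=
  ∫ ω, Complex.exp (Complex.I * ((inner ℝ t (X ω) : ℝ) : ℂ)) ∂P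

/-- Characteristic function of a measure on `ℝ^d`. -/
def mCharFun {d : ℕ} (μ : Measure (Ed d)) (t : Ed d) : ℂ :=
  ∫ x, Complex.exp (Complex.I * ((inner ℝ t x : ℝ) : ℂ)) ∂μ

lemma mact_mact {d : ℕ} (M N : Matrix (Fin d) (Fin d) ℝ) (x : Ed d) :
    mact M (mact N x) = mact (M * N) x := by
  simp [mact, Matrix.toEuclideanLin_apply, Matrix.mulVec_mulVec]

lemma mact_one {d : ℕ} (x : Ed d) : mact (1 : Matrix (Fin d) (Fin d) ℝ) x = x := by
  simp [mact, Matrix.toEuclideanLin_apply]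

/-- **A sufficient condition for H3** (Corollary 2.13 of Delbaen–Kowalski–Nikeghbali):
under H1 and H2, if there are a non-decreasing function `c : [0,∞) → [0,∞)` with
`c(0) = 1` and an integrable `h : ℝ^d → [0,∞)` such that
`|φ_n(t)| ≤ h(A_n* t)·c(|t|)` for all `n, t`, then H3 holds, i.e. `(X_n)` satisfies
mod-φ convergence. -/
theorem mod_phi_sufficient_condition
    {d : ℕ} (hd : 1 ≤ d)
    {Ω : Type*} [MeasurableSpace Ω] (P : Measure Ω) [IsProbabilityMeasure P]
    (X : ℕ → Ω → Ed d) (hX : ∀ n, Measurable (X n))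
    (μ : Measure (Ed d)) [IsProbabilityMeasure μ]
    (A : ℕ → Matrix (Fin d) (Fin d) ℝ) (hA : ∀ n, IsUnit (A n).det)
    -- H1 : the characteristic function of μ is integrable
    (hH1 : Integrable (fun t => mCharFun μ t))
    -- H2 : Σ_n = A_n⁻¹ → 0 and φ_n(Σ_n* t) → φ(t) uniformly on compact sets
    (hSigma : Tendsto (fun n => (A n)⁻¹) atTop (𝓝 0))
    (hH2 : ∀ K : Set (Ed d), IsCompact K →
      TendstoUniformlyOn (fun n t => rvCharFun P (X n) (mact ((A n)⁻¹)ᵀ t))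
        (mCharFun μ) atTop K)
    -- the domination hypothesis
    (c : ℝ → ℝ) (hc0 : c 0 = 1) (hcmono : MonotoneOn c (Set.Ici 0))
    (hcpos : ∀ x : ℝ, 0 ≤ x → 0 ≤ c x)
    (h : Ed d → ℝ) (hh : Integrable h) (hhpos : ∀ t, 0 ≤ h t)
    (hdom : ∀ n : ℕ, ∀ t : Ed d,
      ‖rvCharFun P (X n) t‖ ≤ h (mact (A n)ᵀ t) * c ‖t‖) :
    -- conclusion : H3 holds
    ∀ k : ℝ, 0 ≤ k → ∀ ε : ℝ, 0 < ε → ∃ a : ℝ, ∀ n : ℕ,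
      (∫ t in {t : Ed d | a ≤ ‖t‖ ∧ ‖mact ((A n)⁻¹)ᵀ t‖ ≤ k},
        ‖rvCharFun P (X n) (mact ((A n)⁻¹)ᵀ t)‖) ≤ ε := by
  intro k hk ε hε
  have hck : 0 ≤ c k := hcpos k hk
  -- tail integrals of h tend to 0
  set s : ℕ → Set (Ed d) := fun m => {t : Ed d | (m : ℝ) ≤ ‖t‖} with hs
  have hsm : ∀ m : ℕ, MeasurableSet (s m) := by
    intro m
    exact measurableSet_le measurable_const measurable_norm
  have hanti : Antitone s := by
    intro i j hij t ht
    simp only [hs, Set.mem_setOf_eq] at ht ⊢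
    exact le_trans (by exact_mod_cast hij) ht
  have hiInter : (⋂ m, s m) = (∅ : Set (Ed d)) := by
    ext t
    simp only [Set.mem_iInter, Set.mem_empty_iff_false, iff_false]
    intro hall
    obtain ⟨m, hm⟩ := exists_nat_gt ‖t‖
    have := hall m
    simp only [hs, Set.mem_setOf_eq] at this
    linarith
  have htail : Tendsto (fun m => ∫ t in s m, h t) atTop (𝓝 0) := by
    have := Antitone.tendsto_setIntegral hsm hanti (hh.integrableOn (s := s 0))
    rwa [hiInter, MeasureTheory.setIntegral_empty] at this
  obtain ⟨N, hN⟩ := Metric.tendsto_atTop.mp htail (ε / (c k + 1)) (by positivity)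
  set m := N with hmN
  have hm := hN N le_rfl
  refine ⟨(m : ℝ), fun n => ?_⟩
  set Sg := ((A n)⁻¹)ᵀ with hSg
  have hkey : ∀ t : Ed d, mact (A n)ᵀ (mact Sg t) = t := by
    intro t
    rw [hSg, mact_mact, ← Matrix.transpose_mul, Matrix.nonsing_inv_mul _ (hA n),
      Matrix.transpose_one, mact_one]
  set S : Set (Ed d) := {t : Ed d | (m : ℝ) ≤ ‖t‖ ∧ ‖mact Sg t‖ ≤ k} with hSdef
  have hmactCont : Continuous (fun t : Ed d => mact Sg t) :=
    (Matrix.toEuclideanLin Sg).continuous_of_finiteDimensional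
  have hSmeas : MeasurableSet S := by
    apply MeasurableSet.inter
    · exact measurableSet_le measurable_const measurable_norm
    · exact measurableSet_le (hmactCont.norm.measurable) measurable_const
  -- pointwise bound on S
  have hbound : ∀ t ∈ S, ‖rvCharFun P (X n) (mact Sg t)‖ ≤ h t * c k := by
    intro t ht
    have h1 := hdom n (mact Sg t)
    rw [hkey t] at h1
    refine h1.trans ?_
    apply mul_le_mul_of_nonneg_left _ (hhpos t)
    exact hcmono (Set.mem_Ici.mpr (norm_nonneg _)) (Set.mem_Ici.mpr hk) ht.2
  have hint : ∫ t in S, ‖rvCharFun P (X n) (mact Sg t)‖ ≤ ∫ t in S, h t * c k := by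
    apply integral_mono_of_nonneg
    · exact Eventually.of_forall fun t => norm_nonneg _
    · exact ((hh.integrableOn).mul_const (c k))
    · filter_upwards [ae_restrict_mem hSmeas] with t ht using hbound t ht
  have hint2 : ∫ t in S, h t * c k ≤ ∫ t in s m, h t * c k := by
    apply setIntegral_mono_set
    · exact (hh.mul_const (c k)).integrableOn
    · exact Eventually.of_forall fun t => mul_nonneg (hhpos t) hck
    · exact HasSubset.Subset.eventuallyLE fun t ht => ht.1
  have hint3 : ∫ t in s m, h t * c k = (∫ t in s m, h t) * c k :=
    integral_mul_const _ _
  have htailm : ∫ t in s m, h t ≤ ε / (c k + 1) := by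
    have := hm
    have h0 : 0 ≤ ∫ t in s m, h t :=
      integral_nonneg fun t => hhpos t
    calc ∫ t in s m, h t = |(∫ t in s m, h t) - 0| := by rw [sub_zero, abs_of_nonneg h0]
    _ ≤ ε / (c k + 1) := by
        have := hm
        rw [Real.dist_eq] at this
        exact this.le
  calc (∫ t in S, ‖rvCharFun P (X n) (mact Sg t)‖) ≤ (∫ t in s m, h t) * c k := by
        exact hint.trans (hint2.trans_eq hint3)
  _ ≤ (ε / (c k + 1)) * c k := mul_le_mul_of_nonneg_right htailm hck
  _ ≤ ε := by
      rw [div_mul_eq_mul_div, div_le_iff₀ (by positivity)]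
      nlinarith
end
end

section
/- For all real numbers 0 < α < β, lim_{σ → 1⁺} (σ − 1) · Σ k^{−σ} n^{−σ} = (3/π²) · log(β/α), where the sum runs over all pairs of positive integers (k, n) with gcd(k,n) = 1 and α < k/n < β. -/
open Filter Topology Real Set

noncomputable section

namespace CPZL

lemma rpow_sub_bounds {σ a b : ℝ} (hσ : 1 < σ) (ha : 0 < a) (hab : a < b) :
    (σ - 1) * (b - a) * b ^ (-σ) ≤ a ^ (1 - σ) - b ^ (1 - σ) ∧
      a ^ (1 - σ) - b ^ (1 - σ) ≤ (σ - 1) * (b - a) * a ^ (-σ) := by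
  have hb : 0 < b := ha.trans hab
  obtain ⟨c, hc, hceq⟩ :=
    exists_hasDerivAt_eq_slope (fun x => x ^ (1 - σ)) (fun x => (1 - σ) * x ^ (-σ)) hab
      (fun x hx => (Real.continuousAt_rpow_const x _
        (Or.inl (ne_of_gt (lt_of_lt_of_le ha hx.1)))).continuousWithinAt)
      (fun x hx => by
        have h := Real.hasDerivAt_rpow_const (x := x) (p := 1 - σ)
          (Or.inl (ne_of_gt (ha.trans hx.1)))
        have : 1 - σ - 1 = -σ := by ring
        rwa [this] at h)
  have hc1 : 0 < c := ha.trans hc.1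
  have hkey : a ^ (1 - σ) - b ^ (1 - σ) = (σ - 1) * (b - a) * c ^ (-σ) := by
    have hba : b - a ≠ 0 := ne_of_gt (by linarith)
    field_simp at hceq
    nlinarith [hceq]
  constructor
  · rw [hkey]
    have : b ^ (-σ) ≤ c ^ (-σ) :=
      Real.rpow_le_rpow_of_nonpos hc1 hc.2.le (by linarith)
    have h1 : 0 ≤ (σ - 1) * (b - a) := by nlinarith
    nlinarith
  · rw [hkey]
    have : c ^ (-σ) ≤ a ^ (-σ) :=
      Real.rpow_le_rpow_of_nonpos ha hc.1.le (by linarith)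
    have h1 : 0 ≤ (σ - 1) * (b - a) := by nlinarith
    nlinarith

lemma abs_rpow_sub_le {σ c x y : ℝ} (hσ : 1 < σ) (hc : 0 < c) (hcx : c ≤ x) (hcy : c ≤ y) :
    |x ^ (1 - σ) - y ^ (1 - σ)| ≤ (σ - 1) * |x - y| * c ^ (-σ) := by
  have key : ∀ u v : ℝ, c ≤ u → c ≤ v → u ≤ v →
      |u ^ (1 - σ) - v ^ (1 - σ)| ≤ (σ - 1) * |u - v| * c ^ (-σ) := by
    intro u v hu hv huv
    rcases eq_or_lt_of_le huv with rfl | h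
    · simp
    · have hu0 : 0 < u := hc.trans_le hu
      have hb := rpow_sub_bounds hσ hu0 h
      have hv0 : 0 < v := hu0.trans h
      have hnn : 0 ≤ u ^ (1 - σ) - v ^ (1 - σ) := by
        have h0 : 0 ≤ (σ - 1) * (v - u) * v ^ (-σ) :=
          mul_nonneg (mul_nonneg (by linarith) (by linarith)) (Real.rpow_nonneg hv0.le _)
        linarith [hb.1]
      rw [abs_of_nonneg hnn, abs_of_nonpos (by linarith : u - v ≤ 0)]
      have h2 : u ^ (-σ) ≤ c ^ (-σ) :=
        Real.rpow_le_rpow_of_nonpos hc hu (by linarith)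
      calc u ^ (1 - σ) - v ^ (1 - σ) ≤ (σ - 1) * (v - u) * u ^ (-σ) := hb.2
        _ ≤ (σ - 1) * (v - u) * c ^ (-σ) := by
            apply mul_le_mul_of_nonneg_left h2; nlinarith
        _ = (σ - 1) * -(u - v) * c ^ (-σ) := by ring
  rcases le_total x y with h | h
  · exact key x y hcx hcy h
  · have := key y x hcy hcx h
    rwa [abs_sub_comm, abs_sub_comm y x] at this


lemma summable_rpow_neg {σ : ℝ} (hσ : 1 < σ) : Summable fun n : ℕ => (n : ℝ) ^ (-σ) :=
  Real.summable_nat_rpow.mpr (by linarith)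

/-- the summand over all pairs (without coprimality) -/
def fG (α β σ : ℝ) (p : ℕ × ℕ) : ℝ :=
  if 0 < p.1 ∧ 0 < p.2 ∧ α < (p.1 : ℝ) / (p.2 : ℝ) ∧ (p.1 : ℝ) / (p.2 : ℝ) < β
  then (p.1 : ℝ) ^ (-σ) * (p.2 : ℝ) ^ (-σ) else 0

/-- the summand over coprime pairs -/
def fF (α β σ : ℝ) (p : ℕ × ℕ) : ℝ :=
  if 0 < p.1 ∧ 0 < p.2 ∧ Nat.Coprime p.1 p.2 ∧
      α < (p.1 : ℝ) / (p.2 : ℝ) ∧ (p.1 : ℝ) / (p.2 : ℝ) < β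
  then (p.1 : ℝ) ^ (-σ) * (p.2 : ℝ) ^ (-σ) else 0

lemma fG_nonneg (α β σ : ℝ) (p : ℕ × ℕ) : 0 ≤ fG α β σ p := by
  unfold fG; split
  · exact mul_nonneg (Real.rpow_nonneg (Nat.cast_nonneg _) _)
      (Real.rpow_nonneg (Nat.cast_nonneg _) _)
  · exact le_refl 0

lemma fF_nonneg (α β σ : ℝ) (p : ℕ × ℕ) : 0 ≤ fF α β σ p := by
  unfold fF; split
  · exact mul_nonneg (Real.rpow_nonneg (Nat.cast_nonneg _) _)
      (Real.rpow_nonneg (Nat.cast_nonneg _) _)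
  · exact le_refl 0

lemma fG_le (α β σ : ℝ) (p : ℕ × ℕ) : fG α β σ p ≤ (p.1 : ℝ) ^ (-σ) * (p.2 : ℝ) ^ (-σ) := by
  unfold fG; split
  · exact le_rfl
  · exact mul_nonneg (Real.rpow_nonneg (Nat.cast_nonneg _) _)
      (Real.rpow_nonneg (Nat.cast_nonneg _) _)

lemma fF_le (α β σ : ℝ) (p : ℕ × ℕ) : fF α β σ p ≤ (p.1 : ℝ) ^ (-σ) * (p.2 : ℝ) ^ (-σ) := by
  unfold fF; split
  · exact le_rfl
  · exact mul_nonneg (Real.rpow_nonneg (Nat.cast_nonneg _) _)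
      (Real.rpow_nonneg (Nat.cast_nonneg _) _)

lemma summable_pair {σ : ℝ} (hσ : 1 < σ) :
    Summable fun p : ℕ × ℕ => (p.1 : ℝ) ^ (-σ) * (p.2 : ℝ) ^ (-σ) :=
  (summable_rpow_neg hσ).mul_of_nonneg (summable_rpow_neg hσ)
    (fun n => Real.rpow_nonneg (Nat.cast_nonneg n) _)
    (fun n => Real.rpow_nonneg (Nat.cast_nonneg n) _)

lemma summable_fG {α β σ : ℝ} (hσ : 1 < σ) : Summable (fG α β σ) :=
  Summable.of_nonneg_of_le (fG_nonneg α β σ) (fG_le α β σ) (summable_pair hσ)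

lemma summable_fF {α β σ : ℝ} (hσ : 1 < σ) : Summable (fF α β σ) :=
  Summable.of_nonneg_of_le (fF_nonneg α β σ) (fF_le α β σ) (summable_pair hσ)

/-- inner sum over numerators, for fixed denominator n -/
def g (α β σ : ℝ) (n : ℕ) : ℝ := ∑' k : ℕ, fG α β σ (k, n)

lemma cond_iff {α β : ℝ} (hα : 0 < α) {n : ℕ} (hn : 0 < n) (k : ℕ) :
    (0 < k ∧ 0 < n ∧ α < (k : ℝ) / (n : ℝ) ∧ (k : ℝ) / (n : ℝ) < β) ↔
      k ∈ Finset.Ico (⌊α * n⌋₊ + 1) ⌈β * n⌉₊ := by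
  have hn0 : (0 : ℝ) < n := by exact_mod_cast hn
  have hαn : 0 ≤ α * n := by positivity
  constructor
  · rintro ⟨hk, -, h1, h2⟩
    rw [Finset.mem_Ico]
    constructor
    · have : α * n < k := by rwa [lt_div_iff₀ hn0] at h1
      have := (Nat.floor_lt hαn).mpr this
      omega
    · have : (k : ℝ) < β * n := by rwa [div_lt_iff₀ hn0] at h2
      exact Nat.lt_ceil.mpr this
  · intro hk
    rw [Finset.mem_Ico] at hk
    have h1 : α * n < k := (Nat.floor_lt hαn).mp (by omega)
    have h2 : (k : ℝ) < β * n := Nat.lt_ceil.mp hk.2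
    have hk0 : 0 < k := by
      rcases Nat.eq_zero_or_pos k with rfl | h
      · exfalso; simp at h1; nlinarith
      · exact h
    exact ⟨hk0, hn, (lt_div_iff₀ hn0).mpr h1, (div_lt_iff₀ hn0).mpr h2⟩

lemma g_eq_sum {α β : ℝ} (hα : 0 < α) (σ : ℝ) {n : ℕ} (hn : 0 < n) :
    g α β σ n = ∑ k ∈ Finset.Ico (⌊α * n⌋₊ + 1) ⌈β * n⌉₊, (k : ℝ) ^ (-σ) * (n : ℝ) ^ (-σ) := by
  unfold g
  rw [tsum_eq_sum (s := Finset.Ico (⌊α * n⌋₊ + 1) ⌈β * n⌉₊) ?_]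
  · apply Finset.sum_congr rfl
    intro k hk
    unfold fG
    rw [if_pos ((cond_iff hα hn k).mpr hk)]
  · intro k hk
    unfold fG
    rw [if_neg (fun h => hk ((cond_iff hα hn k).mp h))]

lemma g_zero (α β σ : ℝ) : g α β σ 0 = 0 := by
  unfold g
  convert tsum_zero with k
  unfold fG
  rw [if_neg (by rintro ⟨-, h, -⟩; exact lt_irrefl 0 h)]

lemma g_nonneg (α β σ : ℝ) (n : ℕ) : 0 ≤ g α β σ n :=
  tsum_nonneg (fun k => fG_nonneg α β σ _)

lemma g_le {α β : ℝ} (hα : 0 < α) {σ : ℝ} (hσ : 1 < σ) (n : ℕ) :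
    g α β σ n ≤ (⌈β * n⌉₊ : ℝ) := by
  rcases Nat.eq_zero_or_pos n with rfl | hn
  · rw [g_zero]; positivity
  rw [g_eq_sum hα σ hn]
  calc ∑ k ∈ Finset.Ico (⌊α * n⌋₊ + 1) ⌈β * n⌉₊, (k : ℝ) ^ (-σ) * (n : ℝ) ^ (-σ)
      ≤ ∑ k ∈ Finset.Ico (⌊α * n⌋₊ + 1) ⌈β * n⌉₊, 1 := by
        apply Finset.sum_le_sum
        intro k hk
        rw [Finset.mem_Ico] at hk
        have hk1 : (1 : ℝ) ≤ k := by exact_mod_cast Nat.one_le_iff_ne_zero.mpr (by omega)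
        have hn1 : (1 : ℝ) ≤ n := by exact_mod_cast hn
        calc (k : ℝ) ^ (-σ) * (n : ℝ) ^ (-σ)
            ≤ 1 * 1 := by
              apply mul_le_mul
              · exact Real.rpow_le_one_of_one_le_of_nonpos hk1 (by linarith)
              · exact Real.rpow_le_one_of_one_le_of_nonpos hn1 (by linarith)
              · exact Real.rpow_nonneg (by linarith) _
              · norm_num
          _ = 1 := by norm_num
    _ ≤ (⌈β * n⌉₊ : ℝ) := by
        rw [Finset.sum_const, nsmul_eq_mul, mul_one]
        have h : (Finset.Ico (⌊α * n⌋₊ + 1) ⌈β * n⌉₊).card ≤ ⌈β * n⌉₊ := by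
          rw [Nat.card_Ico]; omega
        exact_mod_cast h


lemma telescope1 (ψ : ℕ → ℝ) {a c : ℕ} (ha : 1 ≤ a) (hac : a ≤ c) :
    ∑ k ∈ Finset.Ico a c, (ψ (k - 1) - ψ k) = ψ (a - 1) - ψ (c - 1) := by
  rw [Finset.sum_Ico_eq_sum_range]
  have h : ∀ i ∈ Finset.range (c - a), ψ (a + i - 1) - ψ (a + i)
      = (fun j => ψ (a - 1 + j)) i - (fun j => ψ (a - 1 + j)) (i + 1) := by
    intro i _
    simp only []
    congr 2 <;> omega
  rw [Finset.sum_congr rfl h, Finset.sum_range_sub']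
  show ψ (a - 1 + 0) - ψ (a - 1 + (c - a)) = ψ (a - 1) - ψ (c - 1)
  rw [show a - 1 + 0 = a - 1 from by omega, show a - 1 + (c - a) = c - 1 from by omega]

lemma telescope2 (ψ : ℕ → ℝ) {a c : ℕ} (hac : a ≤ c) :
    ∑ k ∈ Finset.Ico a c, (ψ k - ψ (k + 1)) = ψ a - ψ c := by
  rw [Finset.sum_Ico_eq_sum_range]
  have h : ∀ i ∈ Finset.range (c - a), ψ (a + i) - ψ (a + i + 1)
      = (fun j => ψ (a + j)) i - (fun j => ψ (a + j)) (i + 1) := by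
    intro i _
    show ψ (a + i) - ψ (a + i + 1) = ψ (a + i) - ψ (a + (i + 1))
    rw [show a + i + 1 = a + (i + 1) from by omega]
  rw [Finset.sum_congr rfl h, Finset.sum_range_sub']
  show ψ (a + 0) - ψ (a + (c - a)) = ψ a - ψ c
  rw [show a + 0 = a from by omega, show a + (c - a) = c from by omega]

lemma g_upper {α β σ : ℝ} (hα : 0 < α) (hσ : 1 < σ) {n : ℕ}
    (h2 : 2 ≤ α * n) (h3 : 2 ≤ (β - α) * n) :
    (σ - 1) * g α β σ n ≤ (n : ℝ) ^ (-σ) * ((α * n - 1) ^ (1 - σ) - (β * n) ^ (1 - σ)) := by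
  have hn : 0 < n := by
    rcases Nat.eq_zero_or_pos n with rfl | h
    · exfalso; push_cast at h2; linarith
    · exact h
  have hn0 : (0 : ℝ) < n := by exact_mod_cast hn
  set a := ⌊α * n⌋₊ + 1 with ha_def
  set c := ⌈β * n⌉₊ with hc_def
  have hfl : 2 ≤ ⌊α * (n : ℝ)⌋₊ := Nat.le_floor (by exact_mod_cast h2)
  have ha2 : 3 ≤ a := by omega
  have haR : (a : ℝ) ≤ α * n + 1 := by
    have := Nat.floor_le (by positivity : (0:ℝ) ≤ α * n)
    push_cast [ha_def]
    linarith
  have hcR : β * n ≤ (c : ℝ) := Nat.le_ceil _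
  have hac : a ≤ c := by
    have : (a : ℝ) ≤ (c : ℝ) := by nlinarith
    exact_mod_cast this
  have hnneg : 0 ≤ (n : ℝ) ^ (-σ) := Real.rpow_nonneg hn0.le _
  set ψ : ℕ → ℝ := fun j => (j : ℝ) ^ (1 - σ) with hψ
  rw [g_eq_sum hα σ hn, Finset.mul_sum]
  have step1 : ∀ k ∈ Finset.Ico a c,
      (σ - 1) * ((k : ℝ) ^ (-σ) * (n : ℝ) ^ (-σ)) ≤ (ψ (k - 1) - ψ k) * (n : ℝ) ^ (-σ) := by
    intro k hk
    rw [Finset.mem_Ico] at hk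
    have hk3 : 3 ≤ k := le_trans ha2 hk.1
    have hcast : ((k - 1 : ℕ) : ℝ) = (k : ℝ) - 1 := by
      push_cast [Nat.cast_sub (by omega : 1 ≤ k)]; ring
    have h0 : (0 : ℝ) < (k : ℝ) - 1 := by
      have : (3 : ℝ) ≤ k := by exact_mod_cast hk3
      linarith
    have hb := (rpow_sub_bounds hσ (a := (k : ℝ) - 1) (b := (k : ℝ)) h0 (by linarith)).1
    have : (σ - 1) * (k : ℝ) ^ (-σ) ≤ ψ (k - 1) - ψ k := by
      rw [hψ]; simp only []
      rw [hcast]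
      calc (σ - 1) * (k : ℝ) ^ (-σ)
          = (σ - 1) * ((k : ℝ) - ((k : ℝ) - 1)) * (k : ℝ) ^ (-σ) := by ring_nf
        _ ≤ ((k : ℝ) - 1) ^ (1 - σ) - (k : ℝ) ^ (1 - σ) := hb
    calc (σ - 1) * ((k : ℝ) ^ (-σ) * (n : ℝ) ^ (-σ))
        = ((σ - 1) * (k : ℝ) ^ (-σ)) * (n : ℝ) ^ (-σ) := by ring
      _ ≤ (ψ (k - 1) - ψ k) * (n : ℝ) ^ (-σ) := mul_le_mul_of_nonneg_right this hnneg
  calc ∑ k ∈ Finset.Ico a c, (σ - 1) * ((k : ℝ) ^ (-σ) * (n : ℝ) ^ (-σ))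
      ≤ ∑ k ∈ Finset.Ico a c, (ψ (k - 1) - ψ k) * (n : ℝ) ^ (-σ) := Finset.sum_le_sum step1
    _ = (ψ (a - 1) - ψ (c - 1)) * (n : ℝ) ^ (-σ) := by
        rw [← Finset.sum_mul, telescope1 ψ (by omega) hac]
    _ ≤ ((α * n - 1) ^ (1 - σ) - (β * n) ^ (1 - σ)) * (n : ℝ) ^ (-σ) := by
        apply mul_le_mul_of_nonneg_right _ hnneg
        have e1 : ψ (a - 1) ≤ (α * n - 1) ^ (1 - σ) := by
          rw [hψ]; simp only []
          apply Real.rpow_le_rpow_of_nonpos (by linarith) _ (by linarith)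
          have : α * n - 1 < ⌊α * (n : ℝ)⌋₊ := Nat.sub_one_lt_floor _
          have hcast : ((a - 1 : ℕ) : ℝ) = ⌊α * (n : ℝ)⌋₊ := by
            rw [ha_def]; push_cast; ring
          rw [hcast]; linarith
        have e2 : (β * n) ^ (1 - σ) ≤ ψ (c - 1) := by
          rw [hψ]; simp only []
          have hc1 : ((c - 1 : ℕ) : ℝ) = (c : ℝ) - 1 := by
            have : 1 ≤ c := by omega
            push_cast [Nat.cast_sub this]; ring
          have hβn : (0 : ℝ) ≤ β * n := by
            have : β * n = α * n + (β - α) * n := by ring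
            linarith
          have hclt : (c : ℝ) < β * n + 1 := Nat.ceil_lt_add_one hβn
          have h3c : (3 : ℝ) ≤ c := by exact_mod_cast le_trans ha2 hac
          apply Real.rpow_le_rpow_of_nonpos _ _ (by linarith)
          · rw [hc1]; linarith
          · rw [hc1]; linarith
        linarith
    _ = (n : ℝ) ^ (-σ) * ((α * n - 1) ^ (1 - σ) - (β * n) ^ (1 - σ)) := by ring

lemma g_lower {α β σ : ℝ} (hα : 0 < α) (hσ : 1 < σ) {n : ℕ}
    (h2 : 2 ≤ α * n) (h3 : 2 ≤ (β - α) * n) :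
    (n : ℝ) ^ (-σ) * ((α * n + 1) ^ (1 - σ) - (β * n) ^ (1 - σ)) ≤ (σ - 1) * g α β σ n := by
  have hn : 0 < n := by
    rcases Nat.eq_zero_or_pos n with rfl | h
    · exfalso; push_cast at h2; linarith
    · exact h
  have hn0 : (0 : ℝ) < n := by exact_mod_cast hn
  set a := ⌊α * n⌋₊ + 1 with ha_def
  set c := ⌈β * n⌉₊ with hc_def
  have hfl : 2 ≤ ⌊α * (n : ℝ)⌋₊ := Nat.le_floor (by exact_mod_cast h2)
  have ha2 : 3 ≤ a := by omega
  have haR : (a : ℝ) ≤ α * n + 1 := by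
    have := Nat.floor_le (by positivity : (0:ℝ) ≤ α * n)
    push_cast [ha_def]
    linarith
  have hcR : β * n ≤ (c : ℝ) := Nat.le_ceil _
  have hac : a ≤ c := by
    have : (a : ℝ) ≤ (c : ℝ) := by nlinarith
    exact_mod_cast this
  have hnneg : 0 ≤ (n : ℝ) ^ (-σ) := Real.rpow_nonneg hn0.le _
  set ψ : ℕ → ℝ := fun j => (j : ℝ) ^ (1 - σ) with hψ
  rw [g_eq_sum hα σ hn, Finset.mul_sum]
  have step1 : ∀ k ∈ Finset.Ico a c,
      (ψ k - ψ (k + 1)) * (n : ℝ) ^ (-σ) ≤ (σ - 1) * ((k : ℝ) ^ (-σ) * (n : ℝ) ^ (-σ)) := by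
    intro k hk
    rw [Finset.mem_Ico] at hk
    have hk3 : 3 ≤ k := le_trans ha2 hk.1
    have hk0 : (0 : ℝ) < k := by exact_mod_cast (by omega : 0 < k)
    have hb := (rpow_sub_bounds hσ (a := (k : ℝ)) (b := (k : ℝ) + 1) hk0 (by linarith)).2
    have : ψ k - ψ (k + 1) ≤ (σ - 1) * (k : ℝ) ^ (-σ) := by
      rw [hψ]; simp only []
      push_cast
      calc (k : ℝ) ^ (1 - σ) - ((k : ℝ) + 1) ^ (1 - σ)
          ≤ (σ - 1) * ((k : ℝ) + 1 - (k : ℝ)) * (k : ℝ) ^ (-σ) := hb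
        _ = (σ - 1) * (k : ℝ) ^ (-σ) := by ring_nf
    calc (ψ k - ψ (k + 1)) * (n : ℝ) ^ (-σ)
        ≤ ((σ - 1) * (k : ℝ) ^ (-σ)) * (n : ℝ) ^ (-σ) := mul_le_mul_of_nonneg_right this hnneg
      _ = (σ - 1) * ((k : ℝ) ^ (-σ) * (n : ℝ) ^ (-σ)) := by ring
  calc (n : ℝ) ^ (-σ) * ((α * n + 1) ^ (1 - σ) - (β * n) ^ (1 - σ))
      = ((α * n + 1) ^ (1 - σ) - (β * n) ^ (1 - σ)) * (n : ℝ) ^ (-σ) := by ring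
    _ ≤ (ψ a - ψ c) * (n : ℝ) ^ (-σ) := by
        apply mul_le_mul_of_nonneg_right _ hnneg
        have e1 : (α * n + 1) ^ (1 - σ) ≤ ψ a := by
          rw [hψ]; simp only []
          have ha0 : (0 : ℝ) < a := by exact_mod_cast (by omega : 0 < a)
          exact Real.rpow_le_rpow_of_nonpos ha0 haR (by linarith)
        have e2 : ψ c ≤ (β * n) ^ (1 - σ) := by
          rw [hψ]; simp only []
          have hβn : (0 : ℝ) < β * n := by
            have : β * n = α * n + (β - α) * n := by ring
            linarith
          exact Real.rpow_le_rpow_of_nonpos hβn hcR (by linarith)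
        linarith
    _ = ∑ k ∈ Finset.Ico a c, (ψ k - ψ (k + 1)) * (n : ℝ) ^ (-σ) := by
        rw [← Finset.sum_mul, telescope2 ψ hac]
    _ ≤ ∑ k ∈ Finset.Ico a c, (σ - 1) * ((k : ℝ) ^ (-σ) * (n : ℝ) ^ (-σ)) :=
        Finset.sum_le_sum step1


lemma summable_Z2 {σ : ℝ} (hσ : 1 < σ) : Summable fun d : ℕ => (d : ℝ) ^ (-(2 * σ)) :=
  Real.summable_nat_rpow.mpr (by linarith)

lemma factorization {α β σ : ℝ} (hα : 0 < α) (hσ : 1 < σ) :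
    ∑' p : ℕ × ℕ, fG α β σ p = (∑' d : ℕ, (d : ℝ) ^ (-(2 * σ))) * ∑' p : ℕ × ℕ, fF α β σ p := by
  classical
  set u : ℕ → ℝ := fun d => if 0 < d then (d : ℝ) ^ (-(2 * σ)) else 0 with hu
  have hu_nonneg : ∀ d, 0 ≤ u d := by
    intro d; rw [hu]; dsimp only; split
    · exact Real.rpow_nonneg (Nat.cast_nonneg _) _
    · exact le_rfl
  have hu_le : ∀ d, u d ≤ (d : ℝ) ^ (-(2 * σ)) := by
    intro d; rw [hu]; dsimp only; split
    · exact le_rfl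
    · exact Real.rpow_nonneg (Nat.cast_nonneg _) _
  have hu_sum : Summable u :=
    Summable.of_nonneg_of_le hu_nonneg hu_le (summable_Z2 hσ)
  have hu_eq : ∑' d, u d = ∑' d : ℕ, (d : ℝ) ^ (-(2 * σ)) := by
    apply tsum_congr
    intro d
    rw [hu]; dsimp only; split
    · rfl
    · have hd : d = 0 := by omega
      subst hd
      rw [Nat.cast_zero, Real.zero_rpow (ne_of_lt (by linarith : -(2 * σ) < 0))]
  set G2 : ℕ × (ℕ × ℕ) → ℝ := fun x => u x.1 * fF α β σ x.2 with hG2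
  -- support facts
  have hsupp : ∀ x : ℕ × (ℕ × ℕ), G2 x ≠ 0 →
      0 < x.1 ∧ 0 < x.2.1 ∧ 0 < x.2.2 ∧ Nat.Coprime x.2.1 x.2.2 ∧
        α < (x.2.1 : ℝ) / (x.2.2 : ℝ) ∧ (x.2.1 : ℝ) / (x.2.2 : ℝ) < β := by
    rintro ⟨d, k, n⟩ hx
    rw [hG2] at hx; dsimp only at hx
    have h1 : u d ≠ 0 := left_ne_zero_of_mul hx
    have h2 : fF α β σ (k, n) ≠ 0 := right_ne_zero_of_mul hx
    have hd : 0 < d := by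
      by_contra h
      rw [hu] at h1; dsimp only at h1; rw [if_neg h] at h1; exact h1 rfl
    have hc : 0 < k ∧ 0 < n ∧ Nat.Coprime k n ∧
        α < (k : ℝ) / (n : ℝ) ∧ (k : ℝ) / (n : ℝ) < β := by
      by_contra h
      unfold fF at h2; rw [if_neg h] at h2; exact h2 rfl
    exact ⟨hd, hc.1, hc.2.1, hc.2.2.1, hc.2.2.2.1, hc.2.2.2.2⟩
  have key : ∑' p : ℕ × ℕ, fG α β σ p = ∑' x : ℕ × (ℕ × ℕ), G2 x := by
    apply tsum_eq_tsum_of_ne_zero_bij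
      (i := fun x => (x.1.1 * x.1.2.1, x.1.1 * x.1.2.2))
    · rintro ⟨⟨d, k, n⟩, hx⟩ ⟨⟨d', k', n'⟩, hy⟩ hxy
      obtain ⟨hd, hk, hn, hco, -, -⟩ := hsupp _ hx
      obtain ⟨hd', hk', hn', hco', -, -⟩ := hsupp _ hy
      simp only [Prod.mk.injEq] at hxy
      have e1 : d * k = d' * k' := hxy.1
      have e2 : d * n = d' * n' := hxy.2
      have hgcd : Nat.gcd (d * k) (d * n) = d := by
        rw [Nat.gcd_mul_left, Nat.Coprime.gcd_eq_one hco, mul_one]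
      have hgcd' : Nat.gcd (d' * k') (d' * n') = d' := by
        rw [Nat.gcd_mul_left, Nat.Coprime.gcd_eq_one hco', mul_one]
      have hdd : d = d' := by rw [← hgcd, e1, e2, hgcd']
      subst hdd
      have hkk : k = k' := Nat.eq_of_mul_eq_mul_left hd e1
      have hnn : n = n' := Nat.eq_of_mul_eq_mul_left hd e2
      apply Subtype.ext
      simp [hkk, hnn]
    · rintro ⟨k, n⟩ hp
      have hc : 0 < k ∧ 0 < n ∧ α < (k : ℝ) / (n : ℝ) ∧ (k : ℝ) / (n : ℝ) < β := by
        by_contra h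
        apply hp
        unfold fG; rw [if_neg h]
      obtain ⟨hk, hn, hr1, hr2⟩ := hc
      set d := Nat.gcd k n with hd_def
      have hd : 0 < d := Nat.gcd_pos_of_pos_left n hk
      have hd0 : (d : ℝ) ≠ 0 := by exact_mod_cast hd.ne'
      have hdk : d ∣ k := Nat.gcd_dvd_left k n
      have hdn : d ∣ n := Nat.gcd_dvd_right k n
      have hkd : 0 < k / d := Nat.div_pos (Nat.le_of_dvd hk hdk) hd
      have hnd : 0 < n / d := Nat.div_pos (Nat.le_of_dvd hn hdn) hd
      have hratio : ((k / d : ℕ) : ℝ) / ((n / d : ℕ) : ℝ) = (k : ℝ) / (n : ℝ) := by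
        rw [Nat.cast_div hdk hd0, Nat.cast_div hdn hd0]
        rw [div_div_div_cancel_right₀]
        exact hd0
      have hmem : G2 (d, (k / d, n / d)) ≠ 0 := by
        rw [hG2]; dsimp only
        apply mul_ne_zero
        · rw [hu]; dsimp only; rw [if_pos hd]
          exact (Real.rpow_pos_of_pos (by exact_mod_cast hd) _).ne'
        · unfold fF
          rw [if_pos ⟨hkd, hnd, Nat.coprime_div_gcd_div_gcd hd, by rw [hratio]; exact hr1,
            by rw [hratio]; exact hr2⟩]
          exact (mul_pos (Real.rpow_pos_of_pos (by exact_mod_cast hkd) _)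
            (Real.rpow_pos_of_pos (by exact_mod_cast hnd) _)).ne'
      refine ⟨⟨(d, (k / d, n / d)), hmem⟩, ?_⟩
      simp only [Prod.mk.injEq]
      exact ⟨Nat.mul_div_cancel' hdk, Nat.mul_div_cancel' hdn⟩
    · rintro ⟨⟨d, k, n⟩, hx⟩
      obtain ⟨hd, hk, hn, hco, hr1, hr2⟩ := hsupp _ hx
      have hd0 : (d : ℝ) ≠ 0 := by exact_mod_cast hd.ne'
      have hratio : ((d * k : ℕ) : ℝ) / ((d * n : ℕ) : ℝ) = (k : ℝ) / (n : ℝ) := by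
        push_cast
        exact mul_div_mul_left _ _ hd0
      show fG α β σ (d * k, d * n) = G2 (d, (k, n))
      unfold fG
      rw [if_pos ⟨Nat.mul_pos hd hk, Nat.mul_pos hd hn, by rw [hratio]; exact hr1,
        by rw [hratio]; exact hr2⟩]
      rw [hG2]; dsimp only
      rw [hu]; dsimp only; rw [if_pos hd]
      unfold fF
      rw [if_pos ⟨hk, hn, hco, hr1, hr2⟩]
      push_cast
      rw [Real.mul_rpow (Nat.cast_nonneg d) (Nat.cast_nonneg k),
        Real.mul_rpow (Nat.cast_nonneg d) (Nat.cast_nonneg n)]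
      have hdpos : (0 : ℝ) < d := by exact_mod_cast hd
      have : (d : ℝ) ^ (-σ) * (d : ℝ) ^ (-σ) = (d : ℝ) ^ (-(2 * σ)) := by
        rw [← Real.rpow_add hdpos]
        norm_num
        ring_nf
      rw [← this]; ring
  rw [key, hG2]
  rw [← hu_eq]
  exact (Summable.tsum_mul_tsum hu_sum (summable_fF hσ)
    (hu_sum.mul_of_nonneg (summable_fF hσ) hu_nonneg (fF_nonneg α β σ))).symm


lemma summable_fiber {α β σ : ℝ} (hσ : 1 < σ) (n : ℕ) :
    Summable fun k : ℕ => fG α β σ (k, n) := by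
  have h : Summable fun k : ℕ => (k : ℝ) ^ (-σ) * (n : ℝ) ^ (-σ) :=
    (summable_rpow_neg hσ).mul_right _
  exact Summable.of_nonneg_of_le (fun k => fG_nonneg α β σ _) (fun k => fG_le α β σ (k, n)) h

lemma summable_swap_fG {α β σ : ℝ} (hσ : 1 < σ) :
    Summable fun q : ℕ × ℕ => fG α β σ q.swap := (summable_fG hσ).prod_symm

lemma G_eq_tsum_g {α β σ : ℝ} (hσ : 1 < σ) :
    ∑' p : ℕ × ℕ, fG α β σ p = ∑' n : ℕ, g α β σ n := by
  have h1 : ∑' q : ℕ × ℕ, fG α β σ (Equiv.prodComm ℕ ℕ q) = ∑' p : ℕ × ℕ, fG α β σ p :=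
    (Equiv.prodComm ℕ ℕ).tsum_eq (fG α β σ)
  rw [← h1]
  have h2 : ∑' q : ℕ × ℕ, fG α β σ q.swap = ∑' (n : ℕ) (k : ℕ), fG α β σ (n, k).swap :=
    Summable.tsum_prod' (summable_swap_fG hσ) (fun n => by
      simpa using summable_fiber hσ n)
  simpa [g] using h2

lemma summable_g {α β σ : ℝ} (hσ : 1 < σ) : Summable (g α β σ) := by
  have h := (summable_prod_of_nonneg
    (f := fun q : ℕ × ℕ => fG α β σ q.swap) (fun q => fG_nonneg α β σ _)).mp
    (summable_swap_fG hσ)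
  exact h.2

lemma cont_rpow_one_sub {a : ℝ} (ha : 0 < a) : Continuous fun σ : ℝ => a ^ (1 - σ) := by
  have h : (fun σ : ℝ => a ^ (1 - σ)) = fun σ => Real.exp (Real.log a * (1 - σ)) := by
    funext σ; rw [Real.rpow_def_of_pos ha]
  rw [h]
  continuity

lemma tendsto_two_sub_one : Tendsto (fun σ : ℝ => 2 * σ - 1) (𝓝[>] 1) (𝓝[>] 1) := by
  apply tendsto_nhdsWithin_of_tendsto_nhds_of_eventually_within
  · have h : Tendsto (fun σ : ℝ => 2 * σ - 1) (𝓝 1) (𝓝 (2 * 1 - 1)) :=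
      (continuous_const.mul continuous_id |>.sub continuous_const).tendsto 1
    norm_num at h
    exact h.mono_left nhdsWithin_le_nhds
  · filter_upwards [self_mem_nhdsWithin] with σ hσ
    simp only [Set.mem_Ioi] at hσ ⊢
    linarith

lemma summable_zfull {σ : ℝ} (hσ : 1 < σ) : Summable fun n : ℕ => (n : ℝ) ^ (1 - 2 * σ) :=
  Real.summable_nat_rpow.mpr (by linarith)

lemma tendsto_sub_mul_zfull :
    Tendsto (fun σ : ℝ => (σ - 1) * ∑' n : ℕ, (n : ℝ) ^ (1 - 2 * σ)) (𝓝[>] 1) (𝓝 (1 / 2)) := by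
  have hcomp := tendsto_sub_mul_tsum_nat_rpow.comp tendsto_two_sub_one
  have heq : (fun σ : ℝ => (1 / 2 : ℝ) * ((2 * σ - 1 - 1) * ∑' n : ℕ, 1 / (n : ℝ) ^ (2 * σ - 1)))
      = fun σ : ℝ => (σ - 1) * ∑' n : ℕ, (n : ℝ) ^ (1 - 2 * σ) := by
    funext σ
    have ht : ∑' n : ℕ, 1 / (n : ℝ) ^ (2 * σ - 1) = ∑' n : ℕ, (n : ℝ) ^ (1 - 2 * σ) := by
      apply tsum_congr
      intro n
      rw [show (1 - 2 * σ) = -(2 * σ - 1) by ring, Real.rpow_neg (Nat.cast_nonneg n), one_div]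
    rw [ht]; ring
  simp only [Function.comp_def] at hcomp
  have h5 := hcomp.const_mul (1 / 2 : ℝ)
  rw [heq] at h5
  norm_num at h5
  exact h5

lemma tendsto_slope_phi {α β : ℝ} (hα : 0 < α) (hβ : 0 < β) :
    Tendsto (fun σ : ℝ => (α ^ (1 - σ) - β ^ (1 - σ)) / (σ - 1)) (𝓝[>] 1)
      (𝓝 (Real.log (β / α))) := by
  have hda : HasDerivAt (fun σ : ℝ => α ^ (1 - σ)) (-Real.log α) 1 := by
    have h1 : HasDerivAt (fun σ : ℝ => Real.log α * (1 - σ)) (-Real.log α) 1 := by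
      have h2 : HasDerivAt (fun σ : ℝ => 1 - σ) (-1) 1 :=
        (hasDerivAt_id 1).const_sub 1
      have := h2.const_mul (Real.log α)
      simpa [mul_comm] using this
    have h3 := h1.exp
    simp only [mul_zero, sub_self, mul_one, Real.exp_zero] at h3
    have h4 : (fun σ : ℝ => Real.exp (Real.log α * (1 - σ))) = fun σ : ℝ => α ^ (1 - σ) := by
      funext σ; rw [Real.rpow_def_of_pos hα]
    rwa [h4, one_mul] at h3
  have hdb : HasDerivAt (fun σ : ℝ => β ^ (1 - σ)) (-Real.log β) 1 := by
    have h1 : HasDerivAt (fun σ : ℝ => Real.log β * (1 - σ)) (-Real.log β) 1 := by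
      have h2 : HasDerivAt (fun σ : ℝ => 1 - σ) (-1) 1 :=
        (hasDerivAt_id 1).const_sub 1
      have := h2.const_mul (Real.log β)
      simpa [mul_comm] using this
    have h3 := h1.exp
    simp only [mul_zero, sub_self, mul_one, Real.exp_zero] at h3
    have h4 : (fun σ : ℝ => Real.exp (Real.log β * (1 - σ))) = fun σ : ℝ => β ^ (1 - σ) := by
      funext σ; rw [Real.rpow_def_of_pos hβ]
    rwa [h4, one_mul] at h3
  have hd : HasDerivAt (fun σ : ℝ => α ^ (1 - σ) - β ^ (1 - σ))
      (Real.log β - Real.log α) 1 := by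
    have h := hda.sub hdb
    have h' : -Real.log α - -Real.log β = Real.log β - Real.log α := by ring
    rwa [h'] at h
  have hs := hasDerivAt_iff_tendsto_slope.mp hd
  have hmono : 𝓝[>] (1 : ℝ) ≤ 𝓝[≠] (1 : ℝ) :=
    nhdsWithin_mono 1 (fun x hx => ne_of_gt hx)
  have := hs.mono_left hmono
  rw [Real.log_div hβ.ne' hα.ne']
  apply this.congr'
  filter_upwards [self_mem_nhdsWithin] with σ hσ
  rw [slope_def_field]
  norm_num



lemma K_bound {α σ : ℝ} (hα : 0 < α) (hσ1 : 1 < σ) (hσ2 : σ ≤ 2) :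
    (α / 2) ^ (-σ) ≤ (α / 2) ^ (-(2 : ℝ)) + 1 := by
  have h2 : (0 : ℝ) < α / 2 := by linarith
  rcases le_or_gt (α / 2) 1 with h | h
  · have := Real.rpow_le_rpow_of_exponent_ge h2 h (by linarith : -(2:ℝ) ≤ -σ)
    have h0 : (0:ℝ) ≤ (α / 2) ^ (-(2:ℝ)) := Real.rpow_nonneg h2.le _
    linarith
  · have := Real.rpow_le_rpow_of_exponent_le h.le (by linarith : -σ ≤ 0)
    rw [Real.rpow_zero] at this
    have h0 : (0:ℝ) ≤ (α / 2) ^ (-(2:ℝ)) := Real.rpow_nonneg h2.le _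
    linarith

lemma Eterm_bound {α σ e : ℝ} (hα : 0 < α) (hσ1 : 1 < σ) (hσ2 : σ ≤ 2) (he : |e| ≤ 1)
    {x : ℝ} (hx1 : 1 ≤ x) (hae : α / 2 ≤ α + e / x) :
    ‖x ^ (1 - 2 * σ) * ((α + e / x) ^ (1 - σ) - α ^ (1 - σ))‖
      ≤ (σ - 1) * ((α / 2) ^ (-(2 : ℝ)) + 1) * x ^ (-(2 : ℝ)) := by
  have hx0 : 0 < x := lt_of_lt_of_le one_pos hx1
  have habs := abs_rpow_sub_le (σ := σ) (c := α / 2) (x := α + e / x) (y := α) hσ1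
    (by linarith) hae (by linarith)
  have hdist : |α + e / x - α| = |e| / x := by
    rw [add_sub_cancel_left, abs_div, abs_of_pos hx0]
  rw [hdist] at habs
  set K : ℝ := (α / 2) ^ (-(2 : ℝ)) + 1 with hKdef
  have hKb := K_bound hα hσ1 hσ2
  have hK0 : (0:ℝ) ≤ (α/2) ^ (-σ) := Real.rpow_nonneg (by linarith) _
  have hKpos : 0 < K := by
    have h0 : (0:ℝ) ≤ (α / 2) ^ (-(2:ℝ)) := Real.rpow_nonneg (by linarith) _
    rw [hKdef]; linarith
  have hδ : |(α + e / x) ^ (1 - σ) - α ^ (1 - σ)| ≤ (σ - 1) * (1 / x) * K := by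
    have h1 : |e| / x ≤ 1 / x := by gcongr
    calc |(α + e / x) ^ (1 - σ) - α ^ (1 - σ)|
        ≤ (σ - 1) * (|e| / x) * (α / 2) ^ (-σ) := habs
      _ ≤ (σ - 1) * (1 / x) * K := by
          have hmm : (σ - 1) * (|e| / x) ≤ (σ - 1) * (1 / x) :=
            mul_le_mul_of_nonneg_left h1 (by linarith : (0:ℝ) ≤ σ - 1)
          have hnn : (0:ℝ) ≤ (σ - 1) * (1 / x) :=
            mul_nonneg (by linarith) (by positivity)
          exact mul_le_mul hmm hKb hK0 hnn
  have hterm_eq : ‖x ^ (1 - 2 * σ) * ((α + e / x) ^ (1 - σ) - α ^ (1 - σ))‖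
      = x ^ (1 - 2 * σ) * |(α + e / x) ^ (1 - σ) - α ^ (1 - σ)| := by
    rw [Real.norm_eq_abs, abs_mul, abs_of_nonneg (Real.rpow_nonneg hx0.le _)]
  have hxpow : x ^ ((1 - 2 * σ) + (-1)) = x ^ (1 - 2 * σ) * (1 / x) := by
    rw [Real.rpow_add hx0, Real.rpow_neg_one, one_div]
  have hx2 : x ^ ((1 - 2 * σ) + (-1)) ≤ x ^ (-(2:ℝ)) :=
    Real.rpow_le_rpow_of_exponent_le hx1 (by linarith)
  calc ‖x ^ (1 - 2 * σ) * ((α + e / x) ^ (1 - σ) - α ^ (1 - σ))‖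
      = x ^ (1 - 2 * σ) * |(α + e / x) ^ (1 - σ) - α ^ (1 - σ)| := hterm_eq
    _ ≤ x ^ (1 - 2 * σ) * ((σ - 1) * (1 / x) * K) :=
        mul_le_mul_of_nonneg_left hδ (Real.rpow_nonneg hx0.le _)
    _ = (σ - 1) * K * (x ^ (1 - 2 * σ) * (1 / x)) := by ring
    _ = (σ - 1) * K * x ^ ((1 - 2 * σ) + (-1)) := by rw [hxpow]
    _ ≤ (σ - 1) * K * x ^ (-(2:ℝ)) :=
        mul_le_mul_of_nonneg_left hx2 (mul_nonneg (by linarith) hKpos.le)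

lemma hi_summand_bounds {α β σ : ℝ} (hσ : 1 < σ) {e : ℝ} (he : |e| ≤ 1)
    {n : ℕ} (h2 : 2 ≤ α * n) (h3 : 2 ≤ (β - α) * n) :
    0 ≤ (n : ℝ) ^ (-σ) * ((α * n + e) ^ (1 - σ) - (β * n) ^ (1 - σ)) ∧
      (n : ℝ) ^ (-σ) * ((α * n + e) ^ (1 - σ) - (β * n) ^ (1 - σ)) ≤ (n : ℝ) ^ (-σ) := by
  have he1 : -1 ≤ e := neg_le_of_abs_le he
  have he2 : e ≤ 1 := le_of_abs_le he
  have h1 : 1 ≤ α * n + e := by linarith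
  have hβn : α * n + e ≤ β * n := by
    have hb : β * (n:ℝ) = α * n + (β - α) * n := by ring
    linarith
  have hnn : 0 ≤ (n:ℝ) ^ (-σ) := Real.rpow_nonneg (Nat.cast_nonneg n) _
  have hmono : (β * n) ^ (1 - σ) ≤ (α * n + e) ^ (1 - σ) :=
    Real.rpow_le_rpow_of_nonpos (by linarith) hβn (by linarith)
  constructor
  · exact mul_nonneg hnn (by linarith)
  · have hle1 : (α * n + e) ^ (1 - σ) ≤ 1 :=
      Real.rpow_le_one_of_one_le_of_nonpos h1 (by linarith)
    have hpos : 0 ≤ ((β : ℝ) * n) ^ (1 - σ) := Real.rpow_nonneg (by linarith) _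
    calc (n : ℝ) ^ (-σ) * ((α * n + e) ^ (1 - σ) - (β * n) ^ (1 - σ))
        ≤ (n : ℝ) ^ (-σ) * 1 := mul_le_mul_of_nonneg_left (by linarith) hnn
      _ = (n : ℝ) ^ (-σ) := mul_one _

lemma tendsto_HiLo {α β : ℝ} (hα : 0 < α) (hαβ : α < β) {e : ℝ} (he : |e| ≤ 1) (N : ℕ)
    (hN2 : ∀ n : ℕ, N ≤ n → 2 ≤ α * n ∧ 2 ≤ (β - α) * n) :
    Tendsto (fun σ : ℝ => ∑' m : ℕ,
        ((m + N : ℕ) : ℝ) ^ (-σ) *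
          ((α * ((m + N : ℕ) : ℝ) + e) ^ (1 - σ) - (β * ((m + N : ℕ) : ℝ)) ^ (1 - σ)))
      (𝓝[>] 1) (𝓝 (Real.log (β / α) / 2)) := by
  have hβ : 0 < β := lt_trans hα hαβ
  have he1 : -1 ≤ e := neg_le_of_abs_le he
  have he2 : e ≤ 1 := le_of_abs_le he
  set K : ℝ := (α / 2) ^ (-(2 : ℝ)) + 1 with hK_def
  have hKpos : 0 < K := by
    have h0 : (0:ℝ) ≤ (α / 2) ^ (-(2:ℝ)) := Real.rpow_nonneg (by linarith) _
    rw [hK_def]; linarith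
  have hD_sum : Summable fun m : ℕ => ((m + N : ℕ) : ℝ) ^ (-(2 : ℝ)) := by
    have h : Summable (fun n : ℕ => (n:ℝ) ^ (-(2:ℝ))) :=
      Real.summable_nat_rpow.mpr (by norm_num)
    exact (summable_nat_add_iff (f := fun n : ℕ => (n:ℝ) ^ (-(2:ℝ))) N).mpr h
  set D : ℝ := ∑' m : ℕ, ((m + N : ℕ) : ℝ) ^ (-(2 : ℝ)) with hD_def
  have hfacts : ∀ m : ℕ, (1:ℝ) ≤ ((m + N : ℕ) : ℝ) ∧
      α / 2 ≤ α + e / ((m + N : ℕ) : ℝ) := by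
    intro m
    obtain ⟨h2, h3⟩ := hN2 (m + N) (by omega)
    have hn' : 0 < m + N := by
      by_contra h
      push_neg at h
      have h0 : m + N = 0 := by omega
      rw [h0] at h2
      push_cast at h2
      linarith
    have hn1 : (1:ℝ) ≤ ((m + N : ℕ) : ℝ) := by exact_mod_cast hn'
    have hn0 : (0:ℝ) < ((m + N : ℕ) : ℝ) := by linarith
    have hinv : 1 / ((m + N : ℕ) : ℝ) ≤ α / 2 := by
      rw [div_le_div_iff₀ hn0 (by norm_num : (0:ℝ) < 2)]
      linarith
    refine ⟨hn1, ?_⟩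
    have h4 : (-1 : ℝ) / ((m + N : ℕ) : ℝ) ≤ e / ((m + N : ℕ) : ℝ) := by gcongr
    have h5 : (-1 : ℝ) / ((m + N : ℕ) : ℝ) = -(1 / ((m + N : ℕ) : ℝ)) := by ring
    linarith
  set φ : ℝ → ℝ := fun σ => α ^ (1 - σ) - β ^ (1 - σ) with hφ_def
  set Z : ℝ → ℝ := fun σ => ∑' n : ℕ, (n : ℝ) ^ (1 - 2 * σ) with hZ_def
  set HH : ℝ → ℝ := fun σ => ∑ i ∈ Finset.range N, (i : ℝ) ^ (1 - 2 * σ) with hHH_def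
  set E : ℝ → ℝ := fun σ => ∑' m : ℕ,
      ((m + N : ℕ) : ℝ) ^ (1 - 2 * σ) *
        ((α + e / ((m + N : ℕ) : ℝ)) ^ (1 - σ) - α ^ (1 - σ)) with hE_def
  -- the decomposition identity, for 1 < σ ≤ 2
  have heq : ∀ σ : ℝ, 1 < σ → σ ≤ 2 →
      (∑' m : ℕ, ((m + N : ℕ) : ℝ) ^ (-σ) *
        ((α * ((m + N : ℕ) : ℝ) + e) ^ (1 - σ) - (β * ((m + N : ℕ) : ℝ)) ^ (1 - σ)))
      = E σ + (φ σ * Z σ - φ σ * HH σ) := by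
    intro σ hσ hσ2
    have hsum_tail : Summable fun m : ℕ => ((m + N : ℕ) : ℝ) ^ (1 - 2 * σ) :=
      (summable_nat_add_iff (f := fun n : ℕ => (n:ℝ) ^ (1 - 2 * σ)) N).mpr (summable_zfull hσ)
    have htail_eq : ∑' m : ℕ, ((m + N : ℕ) : ℝ) ^ (1 - 2 * σ) = Z σ - HH σ := by
      have h := Summable.sum_add_tsum_nat_add N (summable_zfull hσ)
      rw [hZ_def, hHH_def]
      dsimp only
      linarith [h]
    have hsumE : Summable fun m : ℕ =>
        ((m + N : ℕ) : ℝ) ^ (1 - 2 * σ) *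
          ((α + e / ((m + N : ℕ) : ℝ)) ^ (1 - σ) - α ^ (1 - σ)) := by
      apply Summable.of_norm_bounded (hD_sum.mul_left ((σ - 1) * K))
      intro m
      obtain ⟨hn1, hae⟩ := hfacts m
      exact Eterm_bound hα hσ hσ2 he hn1 hae
    have hident : ∀ m : ℕ,
        ((m + N : ℕ) : ℝ) ^ (-σ) *
          ((α * ((m + N : ℕ) : ℝ) + e) ^ (1 - σ) - (β * ((m + N : ℕ) : ℝ)) ^ (1 - σ))
        = ((m + N : ℕ) : ℝ) ^ (1 - 2 * σ) *
            ((α + e / ((m + N : ℕ) : ℝ)) ^ (1 - σ) - α ^ (1 - σ))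
          + φ σ * ((m + N : ℕ) : ℝ) ^ (1 - 2 * σ) := by
      intro m
      obtain ⟨hn1, hae⟩ := hfacts m
      set x : ℝ := ((m + N : ℕ) : ℝ) with hx_def
      have hx0 : (0:ℝ) < x := by linarith
      have h1 : α * x + e = x * (α + e / x) := by field_simp
      have h2 : (α * x + e) ^ (1 - σ) = x ^ (1 - σ) * (α + e / x) ^ (1 - σ) := by
        rw [h1, Real.mul_rpow hx0.le (by linarith : (0:ℝ) ≤ α + e / x)]
      have h3 : (β * x) ^ (1 - σ) = x ^ (1 - σ) * β ^ (1 - σ) := by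
        rw [mul_comm, Real.mul_rpow hx0.le hβ.le]
      have h4 : x ^ (-σ) * x ^ (1 - σ) = x ^ (1 - 2 * σ) := by
        rw [← Real.rpow_add hx0]
        congr 1
        ring
      calc x ^ (-σ) * ((α * x + e) ^ (1 - σ) - (β * x) ^ (1 - σ))
          = (x ^ (-σ) * x ^ (1 - σ)) * ((α + e / x) ^ (1 - σ) - β ^ (1 - σ)) := by
            rw [h2, h3]; ring
        _ = x ^ (1 - 2 * σ) * ((α + e / x) ^ (1 - σ) - β ^ (1 - σ)) := by rw [h4]
        _ = x ^ (1 - 2 * σ) * ((α + e / x) ^ (1 - σ) - α ^ (1 - σ))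
              + φ σ * x ^ (1 - 2 * σ) := by
            rw [hφ_def]; ring
    rw [tsum_congr hident, Summable.tsum_add hsumE (hsum_tail.mul_left (φ σ)),
      tsum_mul_left, htail_eq, hE_def]
    ring
  -- limits of the three pieces
  have hE0 : Tendsto E (𝓝[>] 1) (𝓝 0) := by
    apply squeeze_zero_norm' (a := fun σ => (σ - 1) * (K * D))
    · filter_upwards [Ioo_mem_nhdsGT_of_mem (Set.left_mem_Ico.mpr one_lt_two)] with σ hσ
      have hσ1 : 1 < σ := hσ.1
      have hσ2 : σ ≤ 2 := hσ.2.le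
      have hbd : ∀ m : ℕ, ‖((m + N : ℕ) : ℝ) ^ (1 - 2 * σ) *
          ((α + e / ((m + N : ℕ) : ℝ)) ^ (1 - σ) - α ^ (1 - σ))‖
          ≤ (σ - 1) * K * ((m + N : ℕ) : ℝ) ^ (-(2:ℝ)) := by
        intro m
        obtain ⟨hn1, hae⟩ := hfacts m
        exact Eterm_bound hα hσ1 hσ2 he hn1 hae
      have hnormsum : Summable fun m : ℕ => ‖((m + N : ℕ) : ℝ) ^ (1 - 2 * σ) *
          ((α + e / ((m + N : ℕ) : ℝ)) ^ (1 - σ) - α ^ (1 - σ))‖ :=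
        Summable.of_nonneg_of_le (fun m => norm_nonneg _) hbd (hD_sum.mul_left _)
      calc ‖E σ‖ ≤ ∑' m : ℕ, ‖((m + N : ℕ) : ℝ) ^ (1 - 2 * σ) *
            ((α + e / ((m + N : ℕ) : ℝ)) ^ (1 - σ) - α ^ (1 - σ))‖ :=
          norm_tsum_le_tsum_norm hnormsum
        _ ≤ ∑' m : ℕ, (σ - 1) * K * ((m + N : ℕ) : ℝ) ^ (-(2:ℝ)) :=
          Summable.tsum_le_tsum hbd hnormsum (hD_sum.mul_left _)
        _ = (σ - 1) * K * D := tsum_mul_left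
        _ = (σ - 1) * (K * D) := by ring
    · have h : Tendsto (fun σ : ℝ => (σ - 1) * (K * D)) (𝓝 1) (𝓝 ((1 - 1) * (K * D))) :=
        ((continuous_id.sub continuous_const).mul continuous_const).tendsto 1
      norm_num at h
      exact h.mono_left nhdsWithin_le_nhds
  have hφZ : Tendsto (fun σ => φ σ * Z σ) (𝓝[>] 1) (𝓝 (Real.log (β / α) * (1 / 2))) := by
    have hmul := (tendsto_slope_phi hα hβ).mul tendsto_sub_mul_zfull
    apply hmul.congr'
    filter_upwards [self_mem_nhdsWithin] with σ hσ
    rw [Set.mem_Ioi] at hσ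
    have hne : σ - 1 ≠ 0 := sub_ne_zero.mpr (ne_of_gt hσ)
    rw [hφ_def, hZ_def]
    dsimp only
    field_simp
  have hφH : Tendsto (fun σ => φ σ * HH σ) (𝓝[>] 1) (𝓝 0) := by
    apply squeeze_zero_norm' (a := fun σ => ‖φ σ‖ * (N:ℝ))
    · filter_upwards [self_mem_nhdsWithin] with σ hσ
      rw [Set.mem_Ioi] at hσ
      have hHb : 0 ≤ HH σ ∧ HH σ ≤ N := by
        constructor
        · exact Finset.sum_nonneg fun i _ => Real.rpow_nonneg (Nat.cast_nonneg i) _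
        · have hterm : ∀ i ∈ Finset.range N, (i:ℝ) ^ (1 - 2 * σ) ≤ 1 := by
            intro i _
            rcases Nat.eq_zero_or_pos i with rfl | hi
            · rw [Nat.cast_zero, Real.zero_rpow (ne_of_lt (by linarith : 1 - 2 * σ < 0))]
              norm_num
            · exact Real.rpow_le_one_of_one_le_of_nonpos
                (by exact_mod_cast hi) (by linarith)
          calc HH σ ≤ ∑ _i ∈ Finset.range N, (1:ℝ) := Finset.sum_le_sum hterm
            _ = N := by simp
      rw [norm_mul]
      apply mul_le_mul_of_nonneg_left _ (norm_nonneg _)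
      rw [Real.norm_eq_abs, abs_of_nonneg hHb.1]
      exact hHb.2
    · have hφc : Tendsto φ (𝓝 1) (𝓝 0) := by
        have hc : Continuous φ := (cont_rpow_one_sub hα).sub (cont_rpow_one_sub hβ)
        have := hc.tendsto 1
        have hval : φ 1 = 0 := by
          rw [hφ_def]; norm_num
        rwa [hval] at this
      have := (hφc.norm.mul_const (N:ℝ)).mono_left (nhdsWithin_le_nhds (s := Set.Ioi (1:ℝ)))
      simpa using this
  have hfinal := hE0.add (hφZ.sub hφH)
  have hpoint : (0:ℝ) + (Real.log (β / α) * (1 / 2) - 0) = Real.log (β / α) / 2 := by ring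
  rw [hpoint] at hfinal
  apply hfinal.congr'
  filter_upwards [Ioo_mem_nhdsGT_of_mem (Set.left_mem_Ico.mpr one_lt_two)] with σ hσ
  exact (heq σ hσ.1 hσ.2.le).symm


lemma tendsto_sigma_G {α β : ℝ} (hα : 0 < α) (hαβ : α < β) :
    Tendsto (fun σ : ℝ => (σ - 1) * ∑' p : ℕ × ℕ, fG α β σ p) (𝓝[>] 1)
      (𝓝 (Real.log (β / α) / 2)) := by
  have hβα : 0 < β - α := by linarith
  set N : ℕ := max ⌈2 / α⌉₊ ⌈2 / (β - α)⌉₊ + 1 with hN_def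
  have hN2 : ∀ n : ℕ, N ≤ n → 2 ≤ α * n ∧ 2 ≤ (β - α) * n := by
    intro n hn
    have h1 : (⌈2 / α⌉₊ : ℝ) ≤ (n : ℝ) := by
      exact_mod_cast le_trans (by omega : ⌈2 / α⌉₊ ≤ N) hn
    have h2 : (⌈2 / (β - α)⌉₊ : ℝ) ≤ (n : ℝ) := by
      exact_mod_cast le_trans (by omega : ⌈2 / (β - α)⌉₊ ≤ N) hn
    constructor
    · have h3 : 2 / α ≤ (n : ℝ) := le_trans (Nat.le_ceil _) h1
      rw [div_le_iff₀ hα] at h3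
      linarith [mul_comm α (n : ℝ)]
    · have h3 : 2 / (β - α) ≤ (n : ℝ) := le_trans (Nat.le_ceil _) h2
      rw [div_le_iff₀ hβα] at h3
      linarith [mul_comm (β - α) (n : ℝ)]
  set B : ℝ := ∑ n ∈ Finset.range N, (⌈β * n⌉₊ : ℝ) with hB_def
  have hB0 : 0 ≤ B := Finset.sum_nonneg (fun i _ => Nat.cast_nonneg _)
  have hsplit : ∀ σ : ℝ, 1 < σ →
      (σ - 1) * ∑' p : ℕ × ℕ, fG α β σ p
        = (σ - 1) * ∑ n ∈ Finset.range N, g α β σ n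
          + (σ - 1) * ∑' m : ℕ, g α β σ (m + N) := by
    intro σ hσ
    rw [G_eq_tsum_g hσ, ← Summable.sum_add_tsum_nat_add N (summable_g hσ)]
    ring
  have hhead : Tendsto (fun σ : ℝ => (σ - 1) * ∑ n ∈ Finset.range N, g α β σ n)
      (𝓝[>] 1) (𝓝 0) := by
    apply squeeze_zero_norm' (a := fun σ : ℝ => (σ - 1) * B)
    · filter_upwards [self_mem_nhdsWithin] with σ hσ
      rw [Set.mem_Ioi] at hσ
      rw [Real.norm_eq_abs, abs_mul, abs_of_pos (by linarith : (0:ℝ) < σ - 1)]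
      have hs : |∑ n ∈ Finset.range N, g α β σ n| ≤ B := by
        rw [abs_of_nonneg (Finset.sum_nonneg fun i _ => g_nonneg α β σ i)]
        exact Finset.sum_le_sum (fun i _ => g_le hα hσ i)
      exact mul_le_mul_of_nonneg_left hs (by linarith)
    · have h : Tendsto (fun σ : ℝ => (σ - 1) * B) (𝓝 1) (𝓝 ((1 - 1) * B)) :=
        ((continuous_id.sub continuous_const).mul continuous_const).tendsto 1
      norm_num at h
      exact h.mono_left nhdsWithin_le_nhds
  have hHi := tendsto_HiLo hα hαβ (e := (-1 : ℝ)) (by norm_num) N hN2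
  have hLo := tendsto_HiLo hα hαβ (e := (1 : ℝ)) (by norm_num) N hN2
  have htail : Tendsto (fun σ : ℝ => (σ - 1) * ∑' m : ℕ, g α β σ (m + N)) (𝓝[>] 1)
      (𝓝 (Real.log (β / α) / 2)) := by
    apply tendsto_of_tendsto_of_tendsto_of_le_of_le' hLo hHi
    · filter_upwards [self_mem_nhdsWithin] with σ hσ
      rw [Set.mem_Ioi] at hσ
      rw [← tsum_mul_left]
      apply Summable.tsum_le_tsum
      · intro m
        obtain ⟨h2, h3⟩ := hN2 (m + N) (by omega)
        have h := g_lower hα hσ h2 h3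
        exact h
      · apply Summable.of_nonneg_of_le
          (fun m => (hi_summand_bounds hσ (by norm_num : |(1:ℝ)| ≤ 1)
            (hN2 (m + N) (by omega)).1 (hN2 (m + N) (by omega)).2).1)
          (fun m => (hi_summand_bounds hσ (by norm_num : |(1:ℝ)| ≤ 1)
            (hN2 (m + N) (by omega)).1 (hN2 (m + N) (by omega)).2).2)
        exact (summable_nat_add_iff (f := fun n : ℕ => (n:ℝ) ^ (-σ)) N).mpr
          (summable_rpow_neg hσ)
      · exact ((summable_nat_add_iff (f := fun n : ℕ => g α β σ n) N).mpr
          (summable_g hσ)).mul_left _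
    · filter_upwards [self_mem_nhdsWithin] with σ hσ
      rw [Set.mem_Ioi] at hσ
      rw [← tsum_mul_left]
      apply Summable.tsum_le_tsum
      · intro m
        obtain ⟨h2, h3⟩ := hN2 (m + N) (by omega)
        have h := g_upper hα hσ h2 h3
        have hrw : α * ((m + N : ℕ) : ℝ) + (-1 : ℝ) = α * ((m + N : ℕ) : ℝ) - 1 := by ring
        rw [hrw]
        exact h
      · exact ((summable_nat_add_iff (f := fun n : ℕ => g α β σ n) N).mpr
          (summable_g hσ)).mul_left _
      · apply Summable.of_nonneg_of_le
          (fun m => (hi_summand_bounds hσ (by norm_num : |(-1:ℝ)| ≤ 1)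
            (hN2 (m + N) (by omega)).1 (hN2 (m + N) (by omega)).2).1)
          (fun m => (hi_summand_bounds hσ (by norm_num : |(-1:ℝ)| ≤ 1)
            (hN2 (m + N) (by omega)).1 (hN2 (m + N) (by omega)).2).2)
        exact (summable_nat_add_iff (f := fun n : ℕ => (n:ℝ) ^ (-σ)) N).mpr
          (summable_rpow_neg hσ)
  have hsum := hhead.add htail
  rw [zero_add] at hsum
  apply hsum.congr'
  filter_upwards [self_mem_nhdsWithin] with σ hσ
  rw [Set.mem_Ioi] at hσ
  exact (hsplit σ hσ).symm

lemma Z2_at_two : ∑' d : ℕ, (d : ℝ) ^ (-(2 : ℝ)) = Real.pi ^ 2 / 6 := by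
  rw [← hasSum_zeta_two.tsum_eq]
  apply tsum_congr
  intro d
  rcases Nat.eq_zero_or_pos d with rfl | hd
  · rw [Nat.cast_zero, Real.zero_rpow (by norm_num : (-(2:ℝ)) ≠ 0)]
    norm_num
  · have hd0 : (0:ℝ) < d := by exact_mod_cast hd
    rw [show (-(2:ℝ)) = -((2:ℕ):ℝ) by norm_num, Real.rpow_neg hd0.le, Real.rpow_natCast,
      one_div]

lemma tendsto_Z2 : Tendsto (fun σ : ℝ => ∑' d : ℕ, (d : ℝ) ^ (-(2 * σ))) (𝓝[>] 1)
    (𝓝 (Real.pi ^ 2 / 6)) := by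
  have hsum : Summable (fun d : ℕ => (d:ℝ) ^ (-(2:ℝ))) :=
    Real.summable_nat_rpow.mpr (by norm_num)
  rw [← Z2_at_two]
  apply tendsto_tsum_of_dominated_convergence hsum
  · intro d
    rcases Nat.eq_zero_or_pos d with rfl | hd
    · have h0 : ((0:ℕ):ℝ) ^ (-(2:ℝ)) = 0 := by
        rw [Nat.cast_zero, Real.zero_rpow (by norm_num : (-(2:ℝ)) ≠ 0)]
      rw [h0]
      apply Tendsto.congr' _ tendsto_const_nhds
      filter_upwards [self_mem_nhdsWithin] with σ hσ
      rw [Set.mem_Ioi] at hσ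
      rw [Nat.cast_zero, Real.zero_rpow (ne_of_lt (by linarith : -(2 * σ) < 0))]
    · have hd0 : (0:ℝ) < d := by exact_mod_cast hd
      have hfun : (fun σ : ℝ => (d:ℝ) ^ (-(2 * σ)))
          = fun σ : ℝ => Real.exp (Real.log d * (-(2 * σ))) := by
        funext σ; rw [Real.rpow_def_of_pos hd0]
      have hcont : Continuous fun σ : ℝ => (d:ℝ) ^ (-(2 * σ)) := by
        rw [hfun]; continuity
      have h := hcont.tendsto 1
      have hval : (d:ℝ) ^ (-(2 * (1:ℝ))) = (d:ℝ) ^ (-(2:ℝ)) := by norm_num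
      rw [hval] at h
      exact h.mono_left nhdsWithin_le_nhds
  · filter_upwards [self_mem_nhdsWithin] with σ hσ
    rw [Set.mem_Ioi] at hσ
    intro d
    rcases Nat.eq_zero_or_pos d with rfl | hd
    · rw [Nat.cast_zero, Real.zero_rpow (ne_of_lt (by linarith : -(2 * σ) < 0))]
      simp
    · have hd1 : (1:ℝ) ≤ d := by exact_mod_cast hd
      rw [Real.norm_eq_abs, abs_of_nonneg (Real.rpow_nonneg (by linarith) _)]
      exact Real.rpow_le_rpow_of_exponent_le hd1 (by linarith)

end CPZL
open CPZL in
/-- **A limit for coprime pairs** (Delbaen–Kowalski–Nikeghbali §3.5, via the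
ζ-distribution): for `0 < α < β`,
`(σ − 1) · Σ_{(k,n)=1, α<k/n<β} k^{−σ} n^{−σ} → (3/π²)·log(β/α)` as `σ → 1⁺`. -/
theorem coprime_pairs_zeta_limit (α β : ℝ) (hα : 0 < α) (hαβ : α < β) :
    Tendsto (fun σ : ℝ => (σ - 1) *
        ∑' p : ℕ × ℕ,
          if 0 < p.1 ∧ 0 < p.2 ∧ Nat.Coprime p.1 p.2 ∧
              α < (p.1 : ℝ) / (p.2 : ℝ) ∧ (p.1 : ℝ) / (p.2 : ℝ) < β
          then (p.1 : ℝ) ^ (-σ) * (p.2 : ℝ) ^ (-σ) else 0)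
      (nhdsWithin 1 (Set.Ioi 1))
      (𝓝 (3 / Real.pi ^ 2 * Real.log (β / α))) := by
  have hβ : 0 < β := lt_trans hα hαβ
  have hπ : (Real.pi ^ 2 / 6 : ℝ) ≠ 0 := by positivity
  have hdiv := (CPZL.tendsto_sigma_G hα hαβ).div CPZL.tendsto_Z2 hπ
  have hL : Real.log (β / α) / 2 / (Real.pi ^ 2 / 6) = 3 / Real.pi ^ 2 * Real.log (β / α) := by
    have hpi : Real.pi ≠ 0 := Real.pi_ne_zero
    field_simp
    ring
  rw [hL] at hdiv
  apply hdiv.congr'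
  filter_upwards [self_mem_nhdsWithin] with σ hσ
  rw [Set.mem_Ioi] at hσ
  have hfact := CPZL.factorization (α := α) (β := β) (σ := σ) hα hσ
  have hZ1 : (1:ℝ) ≤ ∑' d : ℕ, (d : ℝ) ^ (-(2 * σ)) := by
    have h := Summable.le_tsum (CPZL.summable_Z2 hσ) 1
      (fun j _ => Real.rpow_nonneg (Nat.cast_nonneg j) _)
    simpa using h
  have hZne : (∑' d : ℕ, (d : ℝ) ^ (-(2 * σ))) ≠ 0 := by linarith
  show ((σ - 1) * ∑' p : ℕ × ℕ, CPZL.fG α β σ p) / (∑' d : ℕ, (d : ℝ) ^ (-(2 * σ)))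
      = (σ - 1) * ∑' p : ℕ × ℕ, CPZL.fF α β σ p
  rw [hfact]
  rw [mul_div_assoc, mul_div_cancel_left₀ _ hZne]
end
end
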